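/- Let $l, v, P, Q$ be square-integrable random variables with $\tilde v > 0$, $\tilde l \ge 0$, satisfying the linearized relation $\tilde l \,\Delta v + \tilde v\,\Delta l = 2\tilde P\,\Delta P + 2\tilde Q\,\Delta Q$ almost surely (where $\Delta a = a - \tilde a$). Then $\mathrm{cov}(l, v) \le 2\frac{|\tilde P|\,\hat v}{\tilde v\,\hat P}\hat P^2 + 2\frac{|\tilde Q|\,\hat v}{\tilde v\,\hat Q}\hat Q^2$ (interpreting a term as $0$ whenever the corresponding standard deviation $\hat P$ or $\hat Q$ is $0$). -/

import Mathlib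

/-!
Multiplying the linearized relation by `Δv` and integrating gives
`l̃ v̂² + ṽ cov(l, v) = 2 P̃ cov(P, v) + 2 Q̃ cov(Q, v)`. Since `l̃ v̂² ≥ 0`, dividing by `ṽ > 0`
and bounding `|cov(P, v)| ≤ P̂ v̂`, `|cov(Q, v)| ≤ Q̂ v̂` by Cauchy–Schwarz gives the claim.
-/

open MeasureTheory
open scoped ProbabilityTheory

section CauchySchwarz

variable {Ω : Type*} [MeasurableSpace Ω] {μ : Measure Ω} {f g : Ω → ℝ}

/- Only `f ^ 2`, `g ^ 2` and `f * g` are assumed integrable (not `f` and `g` measurable), so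
Hölder's inequality in `L²` does not apply; we use the discriminant of `t ↦ ∫ (f - t g)²`. -/
theorem sq_integral_mul_le_integral_sq_mul_integral_sq
    (hf : Integrable (fun ω => f ω ^ 2) μ) (hg : Integrable (fun ω => g ω ^ 2) μ)
    (hfg : Integrable (fun ω => f ω * g ω) μ) :
    (∫ ω, f ω * g ω ∂μ) ^ 2 ≤ (∫ ω, f ω ^ 2 ∂μ) * ∫ ω, g ω ^ 2 ∂μ := by
  have hquad : ∀ t : ℝ, 0 ≤ (∫ ω, g ω ^ 2 ∂μ) * (t * t) + (-2 * ∫ ω, f ω * g ω ∂μ) * t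
      + ∫ ω, f ω ^ 2 ∂μ := by
    intro t
    have hexpand : ∫ ω, (f ω - t * g ω) ^ 2 ∂μ
        = ∫ ω, (t * t * g ω ^ 2 + -2 * t * (f ω * g ω)) + f ω ^ 2 ∂μ := by
      congr 1 with ω
      ring
    have hnonneg : 0 ≤ ∫ ω, (f ω - t * g ω) ^ 2 ∂μ := integral_nonneg fun ω => sq_nonneg _
    have hcross : Integrable (fun ω => t * t * g ω ^ 2 + -2 * t * (f ω * g ω)) μ :=
      (hg.const_mul _).add (hfg.const_mul _)
    rw [hexpand, integral_add hcross hf, integral_add (hg.const_mul _) (hfg.const_mul _), integral_const_mul,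
      integral_const_mul] at hnonneg
    linarith
  have hdisc := discrim_le_zero hquad
  rw [discrim] at hdisc
  linarith

theorem abs_integral_mul_le_sqrt_mul_sqrt
    (hf : Integrable (fun ω => f ω ^ 2) μ) (hg : Integrable (fun ω => g ω ^ 2) μ)
    (hfg : Integrable (fun ω => f ω * g ω) μ) :
    |∫ ω, f ω * g ω ∂μ| ≤ √(∫ ω, f ω ^ 2 ∂μ) * √(∫ ω, g ω ^ 2 ∂μ) := by
  rw [← Real.sqrt_mul (integral_nonneg fun ω => sq_nonneg _)]
  exact Real.abs_le_sqrt (sq_integral_mul_le_integral_sq_mul_integral_sq hf hg hfg)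

end CauchySchwarz

theorem integral_mul_eq_of_ae_linear_relation {Ω : Type*} [MeasurableSpace Ω] {μ : Measure Ω}
    {x y z w : Ω → ℝ} {a b c d : ℝ}
    (hxx : Integrable (fun ω => x ω ^ 2) μ) (hyx : Integrable (fun ω => y ω * x ω) μ)
    (hzx : Integrable (fun ω => z ω * x ω) μ) (hwx : Integrable (fun ω => w ω * x ω) μ)
    (hrel : ∀ᵐ ω ∂μ, a * x ω + b * y ω = c * z ω + d * w ω) :
    a * ∫ ω, x ω ^ 2 ∂μ + b * ∫ ω, y ω * x ω ∂μ
      = c * ∫ ω, z ω * x ω ∂μ + d * ∫ ω, w ω * x ω ∂μ := by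
  rw [← integral_const_mul, ← integral_const_mul, ← integral_const_mul, ← integral_const_mul,
    ← integral_add (hxx.const_mul _) (hyx.const_mul _),
    ← integral_add (hzx.const_mul _) (hwx.const_mul _)]
  refine integral_congr_ae ?_
  filter_upwards [hrel] with ω hω
  linear_combination x ω * hω

theorem mul_le_abs_mul_of_abs_le {a b c : ℝ} (h : |b| ≤ c) : a * b ≤ |a| * c :=
  (le_abs_self _).trans (by rw [abs_mul]; gcongr)

/- For `s = 0` both sides vanish, the left one because `x / 0 = 0`. -/
theorem div_mul_mul_sq_eq_mul_div (x y s : ℝ) : x / (y * s) * s ^ 2 = x * s / y := by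
  rcases eq_or_ne s 0 with rfl | hs
  · simp
  · field_simp

theorem stmt8_general {Ω : Type*} [MeasureSpace Ω]
    (l v P Q : Ω → ℝ) (tl tv tP tQ hv hP hQ covlv : ℝ)
    (hhv : hv = Real.sqrt (∫ ω, (v ω - tv) ^ 2))
    (hhP : hP = Real.sqrt (∫ ω, (P ω - tP) ^ 2))
    (hhQ : hQ = Real.sqrt (∫ ω, (Q ω - tQ) ^ 2))
    (hcov : covlv = ∫ ω, (l ω - tl) * (v ω - tv))
    (hv2 : Integrable (fun ω => (v ω - tv) ^ 2))
    (hP2 : Integrable (fun ω => (P ω - tP) ^ 2))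
    (hQ2 : Integrable (fun ω => (Q ω - tQ) ^ 2))
    (hlvint : Integrable (fun ω => (l ω - tl) * (v ω - tv)))
    (hPvint : Integrable (fun ω => (P ω - tP) * (v ω - tv)))
    (hQvint : Integrable (fun ω => (Q ω - tQ) * (v ω - tv)))
    (htvpos : 0 < tv) (htlnn : 0 ≤ tl)
    (hrel : ∀ᵐ ω, tl * (v ω - tv) + tv * (l ω - tl)
        = 2 * tP * (P ω - tP) + 2 * tQ * (Q ω - tQ)) :
    covlv ≤ 2 * (|tP| * hv / (tv * hP)) * hP ^ 2
          + 2 * (|tQ| * hv / (tv * hQ)) * hQ ^ 2 := by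
  have hidentity := integral_mul_eq_of_ae_linear_relation hv2 hlvint hPvint hQvint hrel
  have hvar_term : 0 ≤ tl * ∫ ω, (v ω - tv) ^ 2 :=
    mul_nonneg htlnn (integral_nonneg fun ω => sq_nonneg _)
  have hboundP := mul_le_abs_mul_of_abs_le (a := 2 * tP)
    (abs_integral_mul_le_sqrt_mul_sqrt hP2 hv2 hPvint)
  have hboundQ := mul_le_abs_mul_of_abs_le (a := 2 * tQ)
    (abs_integral_mul_le_sqrt_mul_sqrt hQ2 hv2 hQvint)
  rw [← hhv, ← hhP, abs_mul, abs_two] at hboundP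
  rw [← hhv, ← hhQ, abs_mul, abs_two] at hboundQ
  rw [mul_assoc, mul_assoc 2 (|tQ| * hv / (tv * hQ)), div_mul_mul_sq_eq_mul_div,
    div_mul_mul_sq_eq_mul_div, mul_div_assoc', mul_div_assoc', ← add_div, le_div_iff₀ htvpos,
    hcov]
  linarith

/-- If square-integrable `l, v, P, Q` satisfy `ṽ > 0`, `l̃ ≥ 0` and
the linearized relation `l̃ Δv + ṽ Δl = 2P̃ ΔP + 2Q̃ ΔQ` a.s., then
`cov(l,v) ≤ 2(|P̃| v̂ /(ṽ P̂)) P̂² + 2(|Q̃| v̂ /(ṽ Q̂)) Q̂²` (a term is `0` when the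
corresponding standard deviation vanishes — this is the convention of division
by zero in Lean). -/
theorem stmt8 {Ω : Type*} [MeasureSpace Ω] [IsProbabilityMeasure (ℙ : Measure Ω)]
    (l v P Q : Ω → ℝ) (tl tv tP tQ hv hP hQ covlv : ℝ)
    (htl : tl = ∫ ω, l ω) (htv : tv = ∫ ω, v ω)
    (htP : tP = ∫ ω, P ω) (htQ : tQ = ∫ ω, Q ω)
    (hhv : hv = Real.sqrt (∫ ω, (v ω - tv) ^ 2))
    (hhP : hP = Real.sqrt (∫ ω, (P ω - tP) ^ 2))
    (hhQ : hQ = Real.sqrt (∫ ω, (Q ω - tQ) ^ 2))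
    (hcov : covlv = ∫ ω, (l ω - tl) * (v ω - tv))
    (hv2 : Integrable (fun ω => (v ω - tv) ^ 2))
    (hP2 : Integrable (fun ω => (P ω - tP) ^ 2))
    (hQ2 : Integrable (fun ω => (Q ω - tQ) ^ 2))
    (hlvint : Integrable (fun ω => (l ω - tl) * (v ω - tv)))
    (hPvint : Integrable (fun ω => (P ω - tP) * (v ω - tv)))
    (hQvint : Integrable (fun ω => (Q ω - tQ) * (v ω - tv)))
    (htvpos : 0 < tv) (htlnn : 0 ≤ tl)
    (hrel : ∀ᵐ ω, tl * (v ω - tv) + tv * (l ω - tl)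
        = 2 * tP * (P ω - tP) + 2 * tQ * (Q ω - tQ)) :
    covlv ≤ 2 * (|tP| * hv / (tv * hP)) * hP ^ 2
          + 2 * (|tQ| * hv / (tv * hQ)) * hQ ^ 2 :=
  stmt8_general l v P Q tl tv tP tQ hv hP hQ covlv hhv hhP hhQ hcov hv2 hP2 hQ2 hlvint hPvint hQvint
    htvpos htlnn hrel
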